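/- arXiv:0707.3910 — 2 statements merged into one kernel-verified Lean document; each statement's English description precedes it below -/
import Mathlib

section
/- For natural numbers k ≤ N with k ≥ 1, the sum over j from 0 to k of C(2N, 2j)·C(N-j, N-k) equals (2^(2k-1)·N/k)·C(k+N-1, N-k). -/
/-!
Put `y = b²` with `a² = b² + 1` (think `a = cosh θ`, `b = sinh θ`). The sum is the coefficient
of `yᵏ` in `E_N(y) = ∑ⱼ C(2N,2j) yʲ (1 + y)^(N-j) = ((a + b)^(2N) + (a - b)^(2N)) / 2`,
and since `(a + b)(a - b) = 1` this satisfies the Chebyshev recurrence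
`E_{N+2} = 2(2y + 1) E_{N+1} - E_N`; as a polynomial identity it suffices to check it at every
complex `y`, where such `a` and `b` exist. So does `B_m(y) = ∑ₖ 4ᵏ C(m+k,2k) yᵏ`, by a double
application of Pascal's rule, and comparing initial values gives `2 E_{N+1} = B_{N+1} + B_N`.
Finally `k C(N+k,2k) + k C(N+k-1,2k) = N C(N+k-1,2k-1)` puts the coefficient of `yᵏ` into the
stated form.
-/

open Polynomial Finset

theorem Finset.sum_range_two_mul_add_one {M : Type*} [AddCommMonoid M] (f : ℕ → M) (n : ℕ) :
    ∑ i ∈ range (2 * n + 1), f i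
      = ∑ j ∈ range (n + 1), f (2 * j) + ∑ j ∈ range n, f (2 * j + 1) := by
  induction n with
  | zero => simp
  | succ n ih =>
    rw [show 2 * (n + 1) + 1 = 2 * n + 1 + 1 + 1 by ring, sum_range_succ, sum_range_succ, ih,
      sum_range_succ (fun j => f (2 * j)) (n + 1), sum_range_succ (fun j => f (2 * j + 1)) n,
      mul_add, mul_one]
    abel

theorem Nat.choose_add_two_add_choose (n r : ℕ) :
    (n + 2).choose (r + 2) + n.choose (r + 2) = n.choose r + 2 * (n + 1).choose (r + 2) := by
  rw [Nat.choose_succ_succ' (n + 1), Nat.choose_succ_succ' n r, Nat.choose_succ_succ' n (r + 1)]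
  ring

theorem Nat.succ_mul_choose_add_choose (N l : ℕ) :
    (l + 1) * ((N + l + 1).choose (2 * l + 2) + (N + l).choose (2 * l + 2))
      = N * (N + l).choose (2 * l + 1) := by
  rcases le_or_gt (l + 1) N with h | h
  · obtain ⟨d, rfl⟩ := Nat.exists_eq_add_of_le h
    have hstep := Nat.choose_succ_right_eq (l + 1 + d + l) (2 * l + 1)
    rw [show l + 1 + d + l - (2 * l + 1) = d by omega] at hstep
    rw [Nat.choose_succ_succ' (l + 1 + d + l) (2 * l + 1)]
    linear_combination hstep
  · rw [Nat.choose_eq_zero_of_lt (by omega : N + l + 1 < 2 * l + 2),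
      Nat.choose_eq_zero_of_lt (by omega : N + l < 2 * l + 2),
      Nat.choose_eq_zero_of_lt (by omega : N + l < 2 * l + 1), add_zero, mul_zero, mul_zero]

noncomputable def evenBinomPoly (N : ℕ) : ℤ[X] :=
  ∑ j ∈ range (N + 1), ((2 * N).choose (2 * j) : ℤ[X]) * (X ^ j * (X + 1) ^ (N - j))

theorem coeff_evenBinomPoly {N k : ℕ} (hk : k ≤ N) :
    (evenBinomPoly N).coeff k
      = ∑ j ∈ range (k + 1), ((2 * N).choose (2 * j) * (N - j).choose (N - k) : ℤ) := by
  have high_terms {j : ℕ} (hj : k < j) (hjN : j ∈ range (N + 1)) :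
      (N - j).choose (N - k) = 0 :=
    Nat.choose_eq_zero_of_lt (by rw [mem_range] at hjN; omega)
  simp only [evenBinomPoly, finsetSum_coeff, coeff_natCast_mul, coeff_X_pow_mul',
    coeff_X_add_one_pow]
  rw [sum_subset (range_subset_range.2 (by omega : k + 1 ≤ N + 1))]
  · refine sum_congr rfl fun j hjN => ?_
    split_ifs with hj
    · rw [Nat.choose_symm_of_eq_add (by omega : N - j = N - k + (k - j))]
    · rw [high_terms (by omega) hjN, Nat.cast_zero, mul_zero]
  · intro j hjN hj
    rw [high_terms (by rw [mem_range] at hj; omega) hjN, Nat.cast_zero, mul_zero]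

theorem two_mul_aeval_evenBinomPoly {A : Type*} [CommRing A] {a b : A}
    (hab : a ^ 2 = b ^ 2 + 1) (N : ℕ) :
    2 * aeval (b ^ 2) (evenBinomPoly N) = (a + b) ^ (2 * N) + (a - b) ^ (2 * N) := by
  rw [add_comm a, sub_eq_neg_add, add_pow, add_pow, ← sum_add_distrib,
    sum_range_two_mul_add_one, evenBinomPoly, map_sum, mul_sum]
  simp only [map_mul, map_natCast, map_pow, map_add, aeval_X, map_one]
  rw [sum_eq_zero (s := range N), add_zero]
  · refine sum_congr rfl fun j hj => ?_
    rw [show 2 * N - 2 * j = 2 * (N - j) by omega]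
    simp only [pow_mul, neg_sq, hab]
    ring
  · intro j _
    rw [Odd.neg_pow (odd_two_mul_add_one j)]
    ring

theorem evenBinomPoly_add_two (N : ℕ) :
    evenBinomPoly (N + 2) = 2 * (2 * X + 1) * evenBinomPoly (N + 1) - evenBinomPoly N := by
  refine map_injective (Int.castRingHom ℂ) Int.cast_injective (Polynomial.funext fun y => ?_)
  obtain ⟨b, rfl⟩ := IsAlgClosed.exists_pow_nat_eq y two_pos
  obtain ⟨a, ha⟩ := IsAlgClosed.exists_pow_nat_eq (b ^ 2 + 1) two_pos
  have hE := fun n => two_mul_aeval_evenBinomPoly ha n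
  simp only [aeval_def, eval₂_eq_eval_map] at hE
  simp only [Polynomial.map_sub, Polynomial.map_mul, Polynomial.map_add, Polynomial.map_ofNat,
    map_X, Polynomial.map_one, eval_sub, eval_mul, eval_add, eval_ofNat, eval_X, eval_one]
  apply mul_left_cancel₀ (two_ne_zero (α := ℂ))
  linear_combination hE (N + 2) - 2 * (2 * b ^ 2 + 1) * hE (N + 1) + hE N
    + (2 * ((a + b) ^ (2 * N + 2) + (a - b) ^ (2 * N + 2))
      - (1 + (a + b) * (a - b)) * ((a + b) ^ (2 * N) + (a - b) ^ (2 * N))) * ha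

/-- `b_m(4X)`, where `b_m = ∑ₖ C(m+k, 2k) Xᵏ` is the Morgan–Voyce polynomial. -/
noncomputable def morganVoyceB (m : ℕ) : ℤ[X] :=
  ∑ k ∈ range (m + 1), monomial k (4 ^ k * (m + k).choose (2 * k) : ℤ)

theorem coeff_morganVoyceB (m k : ℕ) :
    (morganVoyceB m).coeff k = 4 ^ k * (m + k).choose (2 * k) := by
  simp only [morganVoyceB, finsetSum_coeff, coeff_monomial, sum_ite_eq', mem_range]
  split_ifs with hk
  · rfl
  · rw [Nat.choose_eq_zero_of_lt (by omega), Nat.cast_zero, mul_zero]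

theorem morganVoyceB_add_two (m : ℕ) :
    morganVoyceB (m + 2) = 2 * (2 * X + 1) * morganVoyceB (m + 1) - morganVoyceB m := by
  rw [show 2 * (2 * X + 1) * morganVoyceB (m + 1)
      = X * (4 * morganVoyceB (m + 1)) + 2 * morganVoyceB (m + 1) by ring]
  ext (_ | k)
  · simp [coeff_morganVoyceB]
  · simp only [coeff_sub, coeff_add, coeff_X_mul, coeff_ofNat_mul, coeff_morganVoyceB]
    have pascal :=
      congrArg (Nat.cast (R := ℤ)) (Nat.choose_add_two_add_choose (m + k + 1) (2 * k))
    push_cast at pascal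
    rw [show m + 2 + (k + 1) = m + k + 1 + 2 by ring, show m + 1 + (k + 1) = m + k + 1 + 1 by ring,
      show m + (k + 1) = m + k + 1 by ring, show m + 1 + k = m + k + 1 by ring,
      show 2 * (k + 1) = 2 * k + 2 by ring]
    linear_combination 4 ^ (k + 1) * pascal

theorem two_mul_evenBinomPoly_succ :
    ∀ N, 2 * evenBinomPoly (N + 1) = morganVoyceB (N + 1) + morganVoyceB N
  | 0 => by
    simp [evenBinomPoly, morganVoyceB, sum_range_succ, ← C_mul_X_pow_eq_monomial]
    ring
  | 1 => by
    simp [evenBinomPoly, morganVoyceB, sum_range_succ, Nat.choose, ← C_mul_X_pow_eq_monomial]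
    ring
  | N + 2 => by
    rw [evenBinomPoly_add_two, morganVoyceB_add_two (N + 1)]
    linear_combination 2 * (2 * X + 1) * two_mul_evenBinomPoly_succ (N + 1)
      - two_mul_evenBinomPoly_succ N - morganVoyceB_add_two N

theorem two_mul_coeff_evenBinomPoly (N k : ℕ) :
    2 * (evenBinomPoly N).coeff k
      = 4 ^ k * ((N + k).choose (2 * k) + (N + k - 1).choose (2 * k) : ℤ) := by
  cases N with
  | zero =>
    rcases k with _ | k
    · simp [evenBinomPoly]
    · simp [evenBinomPoly, coeff_one, Nat.choose_eq_zero_of_lt (by omega : k < 2 * (k + 1)),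
        Nat.choose_eq_zero_of_lt (by omega : k + 1 < 2 * (k + 1))]
  | succ M =>
    rw [← coeff_ofNat_mul, two_mul_evenBinomPoly_succ, coeff_add, coeff_morganVoyceB,
      coeff_morganVoyceB, show M + 1 + k - 1 = M + k by omega, mul_add]

theorem binom_sum_identity2 (N k : ℕ) (hk : 1 ≤ k) (hkN : k ≤ N) :
    ∑ j ∈ Finset.range (k + 1),
      (Nat.choose (2 * N) (2 * j) : ℝ) * Nat.choose (N - j) (N - k)
      = 2 ^ (2 * k - 1) * N / k * Nat.choose (k + N - 1) (N - k) := by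
  have hsum : ∑ j ∈ range (k + 1), ((2 * N).choose (2 * j) : ℝ) * (N - j).choose (N - k)
      = ((evenBinomPoly N).coeff k : ℝ) := by
    rw [coeff_evenBinomPoly hkN]
    push_cast
    rfl
  obtain ⟨l, rfl⟩ : ∃ l, k = l + 1 := ⟨k - 1, by omega⟩
  have hcoeff : (2 : ℝ) * (evenBinomPoly N).coeff (l + 1)
      = 4 ^ (l + 1) * ((N + l + 1).choose (2 * l + 2) + (N + l).choose (2 * l + 2)) := by
    exact_mod_cast two_mul_coeff_evenBinomPoly N (l + 1)
  have habsorb : ((l : ℝ) + 1) * ((N + l + 1).choose (2 * l + 2) + (N + l).choose (2 * l + 2))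
      = N * (N + l).choose (2 * l + 1) := by
    exact_mod_cast Nat.succ_mul_choose_add_choose N l
  have hsymm : (l + 1 + N - 1).choose (N - (l + 1)) = (N + l).choose (2 * l + 1) := by
    rw [show l + 1 + N - 1 = N + l by omega]
    exact Nat.choose_symm_of_eq_add (by omega)
  rw [hsum, hsymm, show 2 * (l + 1) - 1 = 2 * l + 1 by omega, pow_succ, pow_mul]
  push_cast
  field_simp
  linear_combination ((l : ℝ) + 1) / 2 * hcoeff + 4 ^ l * 2 * habsorb
end

section
/- For every natural number m and real a > −1, ∫₀^∞ z^(2m)/(z⁴+2a z²+1)^(m+1) dz = (π/(2^(3m+3/2)(1+a)^(m+1/2)))·C(2m, m). -/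
/-!
The substitution `u = z - z⁻¹` maps `(0, ∞)` bijectively onto `ℝ` with `du = (1 + z⁻²) dz`, and
for an even `f` the inversion `z ↦ z⁻¹` exchanges the two halves `f (z - z⁻¹)` and
`z⁻² f (z - z⁻¹)`; hence `∫_ℝ f = 2 ∫_0^∞ z⁻² f (z - z⁻¹) dz` (Cauchy–Schlömilch).
Since `(z - z⁻¹)² + 2(1 + a) = (z⁴ + 2az² + 1) / z²`, the choice `f u = (u² + 2(1 + a))^-(m+1)`
turns the quartic integral into half of `∫_ℝ (u² + c)^-(m+1)`, which scaling and `u = tan θ`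
reduce to the Wallis integral `∫_{-π/2}^{π/2} cos^(2m) = π C(2m, m) / 4^m`.
-/

open MeasureTheory Real Set

lemma prod_range_wallis_eq_centralBinom_div (m : ℕ) :
    ∏ i ∈ Finset.range m, (2 * (i : ℝ) + 1) / (2 * i + 2) = m.centralBinom / 4 ^ m := by
  induction m with
  | zero => simp
  | succ k ih =>
    have h := congrArg (Nat.cast (R := ℝ)) (Nat.succ_mul_centralBinom_succ k)
    push_cast at h
    rw [Finset.prod_range_succ, ih, pow_succ]
    field_simp
    linear_combination (-2) * h

lemma integral_cos_pow_two_mul (m : ℕ) :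
    ∫ x in -(π / 2)..π / 2, cos x ^ (2 * m) = π * m.centralBinom / 4 ^ m := by
  have hshift := intervalIntegral.integral_comp_sub_right (fun x => cos x ^ (2 * m)) (π / 2)
    (a := 0) (b := π)
  simp only [cos_sub_pi_div_two, zero_sub, sub_half] at hshift
  rw [← hshift, integral_sin_pow_even, prod_range_wallis_eq_centralBinom_div, mul_div_assoc]

lemma integral_inv_one_add_sq_pow_succ (m : ℕ) :
    ∫ x : ℝ, ((1 + x ^ 2) ^ (m + 1))⁻¹ = π * m.centralBinom / 4 ^ m := by
  have htan : ∀ x ∈ Ioo (-(π / 2)) (π / 2),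
      HasDerivWithinAt tan (1 / cos x ^ 2) (Ioo (-(π / 2)) (π / 2)) x := fun x hx =>
    (hasDerivAt_tan (cos_pos_of_mem_Ioo hx).ne').hasDerivWithinAt
  have hsubst := integral_image_eq_integral_abs_deriv_smul measurableSet_Ioo htan injOn_tan
    fun x : ℝ => ((1 + x ^ 2) ^ (m + 1))⁻¹
  rw [image_tan_Ioo, setIntegral_univ] at hsubst
  rw [hsubst, ← integral_cos_pow_two_mul, intervalIntegral.integral_of_le (by linarith [pi_pos]),
    integral_Ioc_eq_integral_Ioo]
  refine setIntegral_congr_fun measurableSet_Ioo fun x hx => ?_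
  have hcos : 0 < cos x := cos_pos_of_mem_Ioo hx
  rw [← inv_pow, inv_one_add_tan_sq hcos.ne', smul_eq_mul, abs_of_pos (by positivity), ← pow_mul,
    pow_succ]
  field_simp
  ring

lemma integral_inv_sq_add_pow_succ (m : ℕ) {c : ℝ} (hc : 0 < c) :
    ∫ x : ℝ, ((x ^ 2 + c) ^ (m + 1))⁻¹ = π * m.centralBinom / (4 ^ m * c ^ ((m : ℝ) + 1 / 2)) := by
  have hsqrt : 0 < √c := sqrt_pos.mpr hc
  have hsq : ∀ x : ℝ, (√c * x) ^ 2 + c = c * (1 + x ^ 2) := fun x => by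
    rw [mul_pow, sq_sqrt hc.le]; ring
  have hrpow : c ^ ((m : ℝ) + 1 / 2) = c ^ (m + 1) / √c := by
    rw [sqrt_eq_rpow, ← rpow_natCast, ← rpow_sub hc]
    push_cast
    ring_nf
  calc ∫ x : ℝ, ((x ^ 2 + c) ^ (m + 1))⁻¹
      = √c * ∫ x : ℝ, (((√c * x) ^ 2 + c) ^ (m + 1))⁻¹ := by
        rw [Measure.integral_comp_mul_left (fun x => ((x ^ 2 + c) ^ (m + 1))⁻¹),
          abs_of_pos (inv_pos.mpr hsqrt), smul_eq_mul, mul_inv_cancel_left₀ hsqrt.ne']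
    _ = √c * ∫ x : ℝ, (c ^ (m + 1))⁻¹ * ((1 + x ^ 2) ^ (m + 1))⁻¹ := by
        simp_rw [hsq, mul_pow, mul_inv]
    _ = π * m.centralBinom / (4 ^ m * c ^ ((m : ℝ) + 1 / 2)) := by
        rw [integral_const_mul, integral_inv_one_add_sq_pow_succ, hrpow]
        field_simp

section CauchySchlomilch

variable {E : Type*} [NormedAddCommGroup E] [NormedSpace ℝ E]

lemma hasDerivWithinAt_sub_inv {z : ℝ} (hz : z ∈ Ioi 0) :
    HasDerivWithinAt (fun z : ℝ => z - z⁻¹) (1 + (z ^ 2)⁻¹) (Ioi 0) z := by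
  have h := (hasDerivAt_id' z).sub (hasDerivAt_inv (ne_of_gt hz))
  rw [sub_neg_eq_add] at h
  exact h.hasDerivWithinAt

lemma injOn_sub_inv_Ioi : InjOn (fun z : ℝ => z - z⁻¹) (Ioi 0) := by
  intro x hx y hy h
  simp only [mem_Ioi] at hx hy
  have hxy : (x - y) * (x * y + 1) = 0 := by
    field_simp at h
    linear_combination h
  rcases mul_eq_zero.mp hxy with h1 | h1
  · linarith
  · nlinarith

lemma image_sub_inv_Ioi : (fun z : ℝ => z - z⁻¹) '' Ioi 0 = univ := by
  refine eq_univ_of_forall fun u => ?_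
  have hs : √(u ^ 2 + 4) ^ 2 = u ^ 2 + 4 := sq_sqrt (by positivity)
  have hu : |u| < √(u ^ 2 + 4) := by
    rw [← sqrt_sq_eq_abs]
    exact sqrt_lt_sqrt (sq_nonneg u) (by linarith)
  have hz : 0 < (u + √(u ^ 2 + 4)) / 2 := by linarith [neg_abs_le u]
  refine ⟨(u + √(u ^ 2 + 4)) / 2, hz, ?_⟩
  have hne : u + √(u ^ 2 + 4) ≠ 0 := by linarith
  field_simp
  linear_combination hs

lemma integral_eq_integral_Ioi_comp_sub_inv (f : ℝ → E) :
    ∫ u, f u = ∫ z in Ioi 0, (1 + (z ^ 2)⁻¹) • f (z - z⁻¹) := by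
  have h := integral_image_eq_integral_abs_deriv_smul measurableSet_Ioi
    (fun z hz => hasDerivWithinAt_sub_inv hz) injOn_sub_inv_Ioi f
  rw [image_sub_inv_Ioi, setIntegral_univ] at h
  rw [h]
  congr 1 with z
  rw [abs_of_pos (by positivity)]

lemma integrable_iff_integrableOn_Ioi_comp_sub_inv (f : ℝ → E) :
    Integrable f ↔ IntegrableOn (fun z => (1 + (z ^ 2)⁻¹) • f (z - z⁻¹)) (Ioi 0) := by
  have h := integrableOn_image_iff_integrableOn_abs_deriv_smul measurableSet_Ioi
    (fun z hz => hasDerivWithinAt_sub_inv hz) injOn_sub_inv_Ioi f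
  rw [image_sub_inv_Ioi, integrableOn_univ] at h
  rw [h]
  congr! 3 with z
  exact abs_of_pos (by positivity)

lemma integral_Ioi_inv_sq_smul_comp_inv (f : ℝ → E) :
    ∫ z in Ioi 0, (z ^ 2)⁻¹ • f z⁻¹ = ∫ z in Ioi 0, f z := by
  have h := integral_image_eq_integral_abs_deriv_smul measurableSet_Ioi
    (fun z (hz : z ∈ Ioi (0 : ℝ)) => (hasDerivAt_inv (ne_of_gt hz)).hasDerivWithinAt)
    (fun x _ y _ h => inv_injective h) f
  rw [image_inv_eq_inv, show (Ioi (0 : ℝ))⁻¹ = Ioi 0 by ext; simp] at h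
  simp only [abs_neg, abs_inv, abs_pow, sq_abs] at h
  exact h.symm

theorem Function.Even.integral_eq_two_smul_integral_Ioi {f : ℝ → E} (hf : f.Even)
    (hint : Integrable f) : ∫ u, f u = (2 : ℝ) • ∫ z in Ioi 0, (z ^ 2)⁻¹ • f (z - z⁻¹) := by
  set A : ℝ → E := fun z => f (z - z⁻¹)
  set B : ℝ → E := fun z => (z ^ 2)⁻¹ • f (z - z⁻¹)
  have hweight : ∀ z : ℝ, 0 < 1 + (z ^ 2)⁻¹ := fun z => by positivity
  have hsum : IntegrableOn (fun z => (1 + (z ^ 2)⁻¹) • A z) (Ioi 0) :=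
    (integrable_iff_integrableOn_Ioi_comp_sub_inv f).mp hint
  have hA : IntegrableOn A (Ioi 0) := by
    refine IntegrableOn.congr_fun
      (hsum.bdd_smul 1 (φ := fun z => (1 + (z ^ 2)⁻¹)⁻¹) (by fun_prop) (ae_of_all _ fun z => ?_))
      (fun z _ => ?_) measurableSet_Ioi
    · rw [norm_inv, Real.norm_of_nonneg (hweight z).le]
      exact inv_le_one_of_one_le₀ (le_add_of_nonneg_right (by positivity))
    · show (1 + (z ^ 2)⁻¹)⁻¹ • (1 + (z ^ 2)⁻¹) • A z = A z
      rw [smul_smul, inv_mul_cancel₀ (hweight z).ne', one_smul]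
  have hB : IntegrableOn B (Ioi 0) :=
    (hsum.sub hA).congr_fun (fun z _ => by simp [A, B, add_smul]) measurableSet_Ioi
  have hAB : ∫ z in Ioi 0, A z = ∫ z in Ioi 0, B z := by
    rw [← integral_Ioi_inv_sq_smul_comp_inv A]
    congr with z
    simp only [A, B, inv_inv, ← hf (z⁻¹ - z), neg_sub]
  calc ∫ u, f u = ∫ z in Ioi 0, A z + B z := by
        rw [integral_eq_integral_Ioi_comp_sub_inv]
        simp only [A, B, add_smul, one_smul]
    _ = (2 : ℝ) • ∫ z in Ioi 0, B z := by rw [integral_add hA hB, hAB, two_smul]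

end CauchySchlomilch

lemma sub_inv_sq_add_eq_div_sq (a : ℝ) {z : ℝ} (hz : z ≠ 0) :
    (z - z⁻¹) ^ 2 + 2 * (1 + a) = (z ^ 4 + 2 * a * z ^ 2 + 1) / z ^ 2 := by
  field_simp
  ring

lemma four_pow_mul_two_rpow_mul_two (m : ℕ) :
    (4 : ℝ) ^ m * 2 ^ ((m : ℝ) + 1 / 2) * 2 = 2 ^ (3 * (m : ℝ) + 3 / 2) := by
  rw [show 3 * (m : ℝ) + 3 / 2 = ((2 * m + 1 : ℕ) : ℝ) + ((m : ℝ) + 1 / 2) by push_cast; ring,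
    rpow_add two_pos ((2 * m + 1 : ℕ) : ℝ), rpow_natCast, pow_succ, pow_mul]
  norm_num
  ring

theorem quartic_n_eq_m (m : ℕ) (a : ℝ) (ha : -1 < a) :
    ∫ z in Set.Ioi (0 : ℝ), z ^ (2 * m) / (z ^ 4 + 2 * a * z ^ 2 + 1) ^ (m + 1)
      = Real.pi / ((2 : ℝ) ^ (3 * (m : ℝ) + 3 / 2) * (1 + a) ^ ((m : ℝ) + 1 / 2))
        * Nat.choose (2 * m) m := by
  have ha' : 0 < 1 + a := by linarith
  have hc : 0 < 2 * (1 + a) := by linarith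
  set g : ℝ → ℝ := fun u => ((u ^ 2 + 2 * (1 + a)) ^ (m + 1))⁻¹
  have hg_int : Integrable g := .of_integral_ne_zero <| by
    rw [integral_inv_sq_add_pow_succ m hc]
    have := Nat.centralBinom_pos m
    positivity
  have hg_even : g.Even := fun u => by simp only [g, neg_sq]
  have hg_sub_inv : ∀ z ∈ Ioi (0 : ℝ), (z ^ 2)⁻¹ • g (z - z⁻¹)
      = z ^ (2 * m) / (z ^ 4 + 2 * a * z ^ 2 + 1) ^ (m + 1) := fun z hz => by
    simp only [g, smul_eq_mul]
    rw [sub_inv_sq_add_eq_div_sq a (ne_of_gt hz), div_pow, inv_div, pow_mul z 2 m,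
      pow_succ' (z ^ 2) m, mul_div_assoc, inv_mul_cancel_left₀ (pow_ne_zero 2 (ne_of_gt hz))]
  have key := hg_even.integral_eq_two_smul_integral_Ioi hg_int
  rw [setIntegral_congr_fun measurableSet_Ioi hg_sub_inv, integral_inv_sq_add_pow_succ m hc,
    mul_rpow zero_le_two ha'.le, smul_eq_mul] at key
  rw [← four_pow_mul_two_rpow_mul_two, ← Nat.centralBinom_eq_two_mul_choose,
    eq_div_of_mul_eq two_ne_zero ((mul_comm _ _).trans key.symm)]
  ring
end
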